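/- arXiv:2109.08691 — 3 statements merged into one kernel-verified Lean document; each statement's English description precedes it below -/
import Mathlib

section
/- For every sign vector m ∈ {+1, −1}^τ and every element Q of the recursively constructed matrix stabilizer group G_τ, there exists ε ∈ {+1, −1} such that Q · Π(m) = ε · Π(m). (Every stabilizer operator of a monitored Clifford circuit fixes the output state |Ψ(m)⟩ up to a sign depending on the measurement outcome m.) -/
noncomputable section

open Matrix

/-- A sign `±1`, modelled as a unit of `ℤ`, coerced into `ℂ`. -/
def signC (u : ℤˣ) : ℂ := ((u : ℤ) : ℂ)

/-- Measurement projector `Π_j(m_j) = (1 + m_j P_j)/2`. -/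
def proj {d : ℕ} (A : Matrix (Fin d) (Fin d) ℂ) (u : ℤˣ) : Matrix (Fin d) (Fin d) ℂ :=
  (2⁻¹ : ℂ) • (1 + signC u • A)

/-- Chronologically ordered product of measurement projectors
`Π(m) = Π_t(m_t) ⋯ Π_1(m_1)` (0-indexed, latest measurement leftmost):
`PiOp P m t` is the product for the measurements `0, …, t`. -/
def PiOp {d : ℕ} (P : ℕ → Matrix (Fin d) (Fin d) ℂ) (m : ℕ → ℤˣ) :
    ℕ → Matrix (Fin d) (Fin d) ℂ
  | 0 => proj (P 0) (m 0)
  | (t+1) => proj (P (t+1)) (m (t+1)) * PiOp P m t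

/-- Extend a sign vector on `Fin τ` to all of `ℕ` by `+1`. -/
def extSign (τ : ℕ) (m : Fin τ → ℤˣ) : ℕ → ℤˣ :=
  fun j => if h : j < τ then m ⟨j, h⟩ else 1

/-- Each measured Pauli operator `P j` as a unit of the matrix ring (it is an
involution, hence invertible). -/
def pUnit {d : ℕ} (P : ℕ → Matrix (Fin d) (Fin d) ℂ) (h : ∀ j, P j * P j = 1)
    (j : ℕ) : (Matrix (Fin d) (Fin d) ℂ)ˣ :=
  ⟨P j, P j, h j, h j⟩

/-- The matrix stabilizer group `G_t` of the monitored Clifford circuit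
(0-indexed), a subgroup of the group of invertible `d × d` matrices:
`G_1` is generated by `P_1`, and `G_{t+1}` is generated by `P_{t+1}` together
with those elements of `G_t` commuting with `P_{t+1}`. -/
def StabGroup {d : ℕ} (P : ℕ → Matrix (Fin d) (Fin d) ℂ)
    (h : ∀ j, P j * P j = 1) : ℕ → Subgroup (Matrix (Fin d) (Fin d) ℂ)ˣ
  | 0 => Subgroup.closure {pUnit P h 0}
  | (t+1) => Subgroup.closure
      ({pUnit P h (t+1)} ∪
        {Q : (Matrix (Fin d) (Fin d) ℂ)ˣ | Q ∈ StabGroup P h t ∧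
          (Q : Matrix (Fin d) (Fin d) ℂ) * P (t+1) =
            P (t+1) * (Q : Matrix (Fin d) (Fin d) ℂ)})

lemma signC_mul_self (u : ℤˣ) : signC u * signC u = 1 := by
  rcases Int.units_eq_one_or u with rfl | rfl <;> simp [signC]

lemma signC_mul (u v : ℤˣ) : signC (u * v) = signC u * signC v := by
  unfold signC
  push_cast
  ring

lemma pauli_mul_proj {d : ℕ} (A : Matrix (Fin d) (Fin d) ℂ) (hA : A * A = 1)
    (u : ℤˣ) : A * proj A u = signC u • proj A u := by
  have h2 : A * (1 + signC u • A) = signC u • (1 + signC u • A) := by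
    rw [mul_add, mul_one, Matrix.mul_smul, hA, smul_add, smul_smul,
      signC_mul_self, one_smul, add_comm]
  unfold proj
  rw [Matrix.mul_smul, smul_comm, h2]

lemma comm_mul_proj {d : ℕ} (A B : Matrix (Fin d) (Fin d) ℂ)
    (hc : B * A = A * B) (u : ℤˣ) : B * proj A u = proj A u * B := by
  unfold proj
  rw [Matrix.mul_smul, Matrix.smul_mul]
  congr 1
  rw [mul_add, add_mul, mul_one, one_mul, Matrix.mul_smul, Matrix.smul_mul, hc]

/-- The subgroup of units fixing a given matrix up to sign. -/
def fixSubgroup {d : ℕ} (Pi0 : Matrix (Fin d) (Fin d) ℂ) :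
    Subgroup (Matrix (Fin d) (Fin d) ℂ)ˣ where
  carrier := {Q | ∃ e : ℤˣ, (Q : Matrix (Fin d) (Fin d) ℂ) * Pi0 = signC e • Pi0}
  one_mem' := ⟨1, by simp [signC]⟩
  mul_mem' := by
    rintro a b ⟨e, he⟩ ⟨f, hf⟩
    exact ⟨e * f, by
      rw [Units.val_mul, mul_assoc, hf, Matrix.mul_smul, he, smul_smul,
        signC_mul, mul_comm]⟩
  inv_mem' := by
    rintro a ⟨e, he⟩
    refine ⟨e, ?_⟩
    have h1 : (↑a⁻¹ : Matrix (Fin d) (Fin d) ℂ) * ((a : Matrix (Fin d) (Fin d) ℂ) * Pi0) = Pi0 := by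
      rw [← mul_assoc, Units.inv_mul, one_mul]
    rw [he, Matrix.mul_smul] at h1
    conv_rhs => rw [← h1]
    rw [smul_smul, signC_mul_self, one_smul]

lemma stab_key {d : ℕ} (P : ℕ → Matrix (Fin d) (Fin d) ℂ)
    (hinv : ∀ j, P j * P j = 1) (m : ℕ → ℤˣ) (t : ℕ)
    (Q : (Matrix (Fin d) (Fin d) ℂ)ˣ) (hQ : Q ∈ StabGroup P hinv t) :
    ∃ e : ℤˣ, (Q : Matrix (Fin d) (Fin d) ℂ) * PiOp P m t =
      signC e • PiOp P m t := by
  induction t generalizing Q with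
  | zero =>
    have hle : StabGroup P hinv 0 ≤ fixSubgroup (PiOp P m 0) := by
      rw [StabGroup, Subgroup.closure_le]
      rintro x rfl
      exact ⟨m 0, pauli_mul_proj (P 0) (hinv 0) (m 0)⟩
    exact hle hQ
  | succ t ih =>
    have hle : StabGroup P hinv (t + 1) ≤ fixSubgroup (PiOp P m (t + 1)) := by
      rw [StabGroup, Subgroup.closure_le]
      rintro x (rfl | ⟨hx, hcx⟩)
      · refine ⟨m (t + 1), ?_⟩
        show P (t + 1) * PiOp P m (t + 1) = _
        rw [PiOp, ← mul_assoc, pauli_mul_proj (P (t + 1)) (hinv (t + 1)) (m (t + 1)),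
          Matrix.smul_mul]
      · obtain ⟨e, he⟩ := ih x hx
        refine ⟨e, ?_⟩
        show (x : Matrix (Fin d) (Fin d) ℂ) * PiOp P m (t + 1) = _
        rw [PiOp, ← mul_assoc, comm_mul_proj (P (t + 1)) _ hcx, mul_assoc, he,
          Matrix.mul_smul]
    exact hle hQ

/-- every stabilizer operator of a monitored Clifford circuit
fixes the output state up to a sign: for every sign vector `m ∈ {±1}^τ` and
every `Q ∈ G_τ` there is a sign `ε = ±1` with `Q · Π(m) = ε · Π(m)`. -/
theorem stabilizer_fixes_output_up_to_sign
    {d τ : ℕ} (hd : 1 ≤ d) (hτ : 1 ≤ τ)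
    (P : ℕ → Matrix (Fin d) (Fin d) ℂ)
    (hherm : ∀ j, (P j)ᴴ = P j)
    (hinv : ∀ j, P j * P j = 1)
    (ε : ℕ → ℕ → ℤˣ)
    (hεdiag : ∀ i, ε i i = 1)
    (hεsymm : ∀ i j, ε i j = ε j i)
    (hcomm : ∀ i j, P i * P j = signC (ε i j) • (P j * P i))
    (m : Fin τ → ℤˣ)
    (Q : (Matrix (Fin d) (Fin d) ℂ)ˣ) (hQ : Q ∈ StabGroup P hinv (τ - 1)) :
    ∃ e : ℤˣ, (Q : Matrix (Fin d) (Fin d) ℂ) * PiOp P (extSign τ m) (τ - 1) =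
      signC e • PiOp P (extSign τ m) (τ - 1) := by
  exact stab_key P hinv (extSign τ m) (τ - 1) Q hQ
end
end

section
/- Let P be an additional d × d Hermitian involution (Pᴴ = P, P² = 1) that commutes or anticommutes with every P_j, with signs c ∈ {+1, −1}^τ: P P_j = c_j P_j P for all j (c is the codeword of P), and define Prob(m, m̄; P) := (1/d) Tr[Π(m)ᴴ Pᴴ Π(m̄) Π(m̄)ᴴ P Π(m)]. Then for all m, m̄ ∈ {+1, −1}^τ, Prob(m, m̄; P) = Prob(m, m̄·c), where (m̄·c)_j = m̄_j c_j and Prob(m, m̄) := Prob(m, m̄; 1). -/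
noncomputable section
open Matrix

/-- `Prob(m, m̄; Q) = (1/d) Tr[Π(m)ᴴ Qᴴ Π(m̄) Π(m̄)ᴴ Q Π(m)]`, the probability
functional with an inserted operator `Q`; `Prob(m, m̄) = Prob(m, m̄; 1)`. -/
def ProbQ (d τ : ℕ) (P : ℕ → Matrix (Fin d) (Fin d) ℂ)
    (Q : Matrix (Fin d) (Fin d) ℂ) (m mb : Fin τ → ℤˣ) : ℂ :=
  (d : ℂ)⁻¹ * Matrix.trace
    ((PiOp P (extSign τ m) (τ - 1))ᴴ * Qᴴ * PiOp P (extSign τ mb) (τ - 1) *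
      (PiOp P (extSign τ mb) (τ - 1))ᴴ * Q * PiOp P (extSign τ m) (τ - 1))

set_option maxHeartbeats 2000000 in
/-- inserting a Hermitian involution `Q` that commutes or
anticommutes with every measured Pauli operator, with codeword signs `c`,
shifts the measurement outcomes of the reversed sequence by `c`:
`Prob(m, m̄; Q) = Prob(m, m̄·c)` where `Prob(m, m̄) = Prob(m, m̄; 1)`. -/
theorem probQ_eq_prob_shifted
    {d τ : ℕ} (hd : 1 ≤ d) (hτ : 1 ≤ τ)
    (P : ℕ → Matrix (Fin d) (Fin d) ℂ)
    (hherm : ∀ j, (P j)ᴴ = P j)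
    (hinv : ∀ j, P j * P j = 1)
    (ε : ℕ → ℕ → ℤˣ)
    (hεdiag : ∀ i, ε i i = 1)
    (hεsymm : ∀ i j, ε i j = ε j i)
    (hcomm : ∀ i j, P i * P j = signC (ε i j) • (P j * P i))
    (Q : Matrix (Fin d) (Fin d) ℂ)
    (hQherm : Qᴴ = Q) (hQinv : Q * Q = 1)
    (c : Fin τ → ℤˣ)
    (hQc : ∀ j : Fin τ, Q * P (j : ℕ) = signC (c j) • (P (j : ℕ) * Q))
    (m mb : Fin τ → ℤˣ) :
    ProbQ d τ P Q m mb = ProbQ d τ P 1 m (mb * c) := by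
  -- key commutation lemma on projectors
  have signC_mul : ∀ u v : ℤˣ, signC (u * v) = signC u * signC v := by
    intro u v; simp [signC]
  have key : ∀ (u : ℤˣ) (j : ℕ) (cj : ℤˣ),
      Q * P j = signC cj • (P j * Q) →
      Q * proj (P j) u = proj (P j) (u * cj) * Q := by
    intro u j cj h
    rw [proj, proj, Matrix.mul_smul, Matrix.smul_mul, mul_add, add_mul,
      mul_one, one_mul, Matrix.mul_smul, Matrix.smul_mul, h, smul_smul,
      signC_mul]
  have hext : ∀ (j : ℕ) (h : j < τ),
      extSign τ (mb * c) j = extSign τ mb j * c ⟨j, h⟩ := by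
    intro j h; simp [extSign, dif_pos h]
  have comm : ∀ t, t < τ →
      Q * PiOp P (extSign τ mb) t = PiOp P (extSign τ (mb * c)) t * Q := by
    intro t
    induction t with
    | zero =>
      intro h
      show Q * proj (P 0) (extSign τ mb 0) = proj (P 0) (extSign τ (mb * c) 0) * Q
      rw [hext 0 h]
      exact key _ 0 _ (hQc ⟨0, h⟩)
    | succ t ih =>
      intro h
      have ht : t < τ := Nat.lt_of_succ_lt h
      show Q * (proj (P (t+1)) (extSign τ mb (t+1)) * PiOp P (extSign τ mb) t)
        = proj (P (t+1)) (extSign τ (mb * c) (t+1)) * PiOp P (extSign τ (mb * c)) t * Q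
      rw [← mul_assoc, hext (t+1) h, key _ (t+1) _ (hQc ⟨t+1, h⟩),
        mul_assoc, ih ht, ← mul_assoc]
  have hτ1 : τ - 1 < τ := Nat.sub_lt (by omega) one_pos
  set A := PiOp P (extSign τ m) (τ - 1) with hA
  set B := PiOp P (extSign τ mb) (τ - 1) with hB
  set B' := PiOp P (extSign τ (mb * c)) (τ - 1) with hB'
  have hQB : Q * B = B' * Q := comm _ hτ1
  have hBQ : Bᴴ * Q = Q * B'ᴴ := by
    have := congrArg Matrix.conjTranspose hQB
    simpa [Matrix.conjTranspose_mul, hQherm] using this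
  unfold ProbQ
  simp only [Matrix.conjTranspose_one, Matrix.mul_one, Matrix.one_mul, hQherm]
  congr 1
  have final : Aᴴ * Q * B * Bᴴ * Q * A = Aᴴ * B' * B'ᴴ * A := by
    calc Aᴴ * Q * B * Bᴴ * Q * A
        = Aᴴ * ((Q * B) * ((Bᴴ * Q) * A)) := by simp [mul_assoc]
      _ = Aᴴ * ((B' * Q) * ((Q * B'ᴴ) * A)) := by rw [hQB, hBQ]
      _ = Aᴴ * (B' * ((Q * Q) * (B'ᴴ * A))) := by simp [mul_assoc]
      _ = Aᴴ * B' * B'ᴴ * A := by rw [hQinv]; simp [mul_assoc]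
  exact congrArg Matrix.trace final
end
end

section
/- Assume additionally that every P_j is traceless: Tr(P_j) = 0. Define the reverse-order measurement operator Π̃(m) := Π_1(m_1) Π_2(m_2) ⋯ Π_τ(m_τ) and Prob̃(m, m̄) := (1/d) Tr[Π̃(m)ᴴ Π̃(m̄) Π̃(m̄)ᴴ Π̃(m)]. Then for every s ∈ {+1, −1}^τ, ∑_{m ∈ {+1, −1}^τ} Prob̃(m, m·s) = 1/|Ê_rev| if s ∈ Ê_rev, and = 0 if s ∉ Ê_rev. In particular, in the system–reference distillation algorithm the sum outcome s = m·m̄ can occur with nonzero probability if and only if s ∈ Ê_rev. -/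
noncomputable section
open Matrix

open scoped Classical

/-- Reverse-order product of measurement projectors
`Π̃(m) = Π_1(m_1) Π_2(m_2) ⋯ Π_t(m_t)` (0-indexed, earliest measurement
leftmost): `PiOpRev P m t` is the product for the measurements `0, …, t`. -/
def PiOpRev {d : ℕ} (P : ℕ → Matrix (Fin d) (Fin d) ℂ) (m : ℕ → ℤˣ) :
    ℕ → Matrix (Fin d) (Fin d) ℂ
  | 0 => proj (P 0) (m 0)
  | (t+1) => PiOpRev P m t * proj (P (t+1)) (m (t+1))

/-- `Prob̃(m, m̄) = (1/d) Tr[Π̃(m)ᴴ Π̃(m̄) Π̃(m̄)ᴴ Π̃(m)]` for the reverse-order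
measurement operators. -/
def ProbRev (d τ : ℕ) (P : ℕ → Matrix (Fin d) (Fin d) ℂ) (m mb : Fin τ → ℤˣ) : ℂ :=
  (d : ℂ)⁻¹ * Matrix.trace
    ((PiOpRev P (extSign τ m) (τ - 1))ᴴ * PiOpRev P (extSign τ mb) (τ - 1) *
      (PiOpRev P (extSign τ mb) (τ - 1))ᴴ * PiOpRev P (extSign τ m) (τ - 1))

/-- The reverse multiplicative error vector `ê^rev_i ∈ {±1}^τ`:
`ê^rev_i(j) = ε(i,j)` for `j ≥ i` and `+1` for `j < i`. -/
def ehatRev {τ : ℕ} (ε : ℕ → ℕ → ℤˣ) (i : Fin τ) : Fin τ → ℤˣ :=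
  fun j => if (i : ℕ) ≤ (j : ℕ) then ε (i : ℕ) (j : ℕ) else 1

/-- The reverse multiplicative error group `Ê_rev ≤ ({±1}^τ, ·)` generated by
the reverse error vectors `ê^rev_1, …, ê^rev_τ`. -/
def EhatRev (τ : ℕ) (ε : ℕ → ℕ → ℤˣ) : Subgroup (Fin τ → ℤˣ) :=
  Subgroup.closure (Set.range (ehatRev ε))

/-!
Expanding every projector, `Π̃(m) = 2^{-τ} ∑_S χ_S(m) P_S`, where `P_S` is the ordered Pauli word
over `S ⊆ {0, …, τ-1}` and `χ_S(m) = ∏_{j ∈ S} m_j`. Words multiply as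
`P_S P_T = σ(T, S) P_{S ∆ T}` with a sign `σ` that is multiplicative in each argument, so the
double sum for `Π̃(m) Π̃(m)ᴴ` collapses to `2^{-τ} ∑_{T ∈ K} χ_T(m) P_T`, where `K` is the set of
`T` with `σ(·, T) ≡ 1`; these are exactly the `T` whose character is trivial on `Ê_rev`.
By cyclicity of the trace, `Prob̃(m, m·s) = d⁻¹ Tr[Π̃(m·s) Π̃(m·s)ᴴ Π̃(m) Π̃(m)ᴴ]`, and summing over
`m` the orthogonality of the characters `χ_T` keeps only the diagonal, leaving
`2^{-τ} ∑_{T ∈ K} χ_T(s)`. Writing the indicator of `K` as the average of `χ_T` over `Ê_rev` and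
using orthogonality once more, this equals `|Ê_rev|⁻¹` if `s ∈ Ê_rev` and `0` otherwise.
-/

open Finset
open scoped symmDiff

namespace ReverseDistillation

section Signs

def signHom : ℤˣ →* ℂ := (Int.castRingHom ℂ : ℤ →* ℂ).comp (Units.coeHom ℤ)

lemma signHom_apply (u : ℤˣ) : signHom u = signC u := rfl

lemma signC_one : signC 1 = 1 := map_one signHom

lemma signC_mul (u v : ℤˣ) : signC (u * v) = signC u * signC v := map_mul signHom u v

lemma signC_mul_self (u : ℤˣ) : signC u * signC u = 1 := by
  rw [← signC_mul, Int.units_mul_self, signC_one]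

lemma signC_prod {ι : Type*} (s : Finset ι) (f : ι → ℤˣ) :
    signC (∏ i ∈ s, f i) = ∏ i ∈ s, signC (f i) :=
  map_prod signHom f s

lemma star_signC (u : ℤˣ) : star (signC u) = signC u := by
  simp [signC]

lemma signC_injective : Function.Injective signC :=
  fun _ _ h => Units.ext (Int.cast_injective h)

lemma prod_one_add_signC {ι : Type*} (s : Finset ι) (u : ι → ℤˣ) :
    ∏ i ∈ s, (1 + signC (u i)) = if ∀ i ∈ s, u i = 1 then 2 ^ #s else 0 := by
  split_ifs with h
  · rw [prod_congr rfl fun i hi => by rw [h i hi, signC_one, one_add_one_eq_two], prod_const]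
  · push Not at h
    obtain ⟨i, hi, hne⟩ := h
    refine prod_eq_zero hi ?_
    rw [(Int.units_eq_one_or (u i)).resolve_left hne]
    simp [signC]

end Signs

section FinsetLemmas

variable {ι : Type*} [DecidableEq ι]

lemma prod_symmDiff_of_mul_self {G : Type*} [CommMonoid G] {f : ι → G}
    (hf : ∀ i, f i * f i = 1) (X Y : Finset ι) :
    ∏ i ∈ X ∆ Y, f i = (∏ i ∈ X, f i) * ∏ i ∈ Y, f i := by
  have hsq : (∏ i ∈ X ∩ Y, f i) * ∏ i ∈ X ∩ Y, f i = 1 := by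
    rw [← prod_mul_distrib]; exact prod_eq_one fun i _ => hf i
  have hdisj : Disjoint (X ∆ Y) (X ∩ Y) := disjoint_symmDiff_inf X Y
  rw [← prod_union_inter, ← sup_eq_union, ← symmDiff_sup_inf X Y, sup_eq_union, inf_eq_inter,
    prod_union hdisj, mul_assoc, hsq, mul_one]

lemma symmDiff_mem_powerset {s X Y : Finset ι} (hX : X ∈ s.powerset) (hY : Y ∈ s.powerset) :
    X ∆ Y ∈ s.powerset :=
  mem_powerset.2 <| symmDiff_subset_union.trans <|
    union_subset (mem_powerset.1 hX) (mem_powerset.1 hY)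

lemma sum_powerset_symmDiff {M : Type*} [AddCommMonoid M] {s Y : Finset ι}
    (hY : Y ∈ s.powerset) (f : Finset ι → M) :
    ∑ X ∈ s.powerset, f (X ∆ Y) = ∑ X ∈ s.powerset, f X := by
  have hmem : ∀ X ∈ s.powerset, X ∆ Y ∈ s.powerset := fun X hX => symmDiff_mem_powerset hX hY
  exact sum_nbij' (· ∆ Y) (· ∆ Y) hmem hmem (fun X _ => symmDiff_symmDiff_cancel_right Y X)
    (fun X _ => symmDiff_symmDiff_cancel_right Y X) fun _ _ => rfl

lemma prod_eq_prod_erase_mul_ite {M : Type*} [CommMonoid M] (s : Finset ι) (f : ι → M) (a : ι) :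
    ∏ x ∈ s, f x = (∏ x ∈ s.erase a, f x) * if a ∈ s then f a else 1 := by
  split_ifs with h
  · exact (prod_erase_mul s f h).symm
  · rw [erase_eq_of_notMem h, mul_one]

lemma erase_symmDiff (S T : Finset ι) (a : ι) : (S ∆ T).erase a = S.erase a ∆ T.erase a := by
  ext; simp only [mem_erase, mem_symmDiff]; tauto

lemma erase_subset_range {S : Finset ℕ} {n : ℕ} (hS : S ⊆ range (n + 1)) :
    S.erase n ⊆ range n := fun j hj => by
  have := mem_range.1 (hS (mem_of_mem_erase hj))
  exact mem_range.2 (by have := ne_of_mem_erase hj; omega)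

end FinsetLemmas

section Characters

lemma extSign_mul {τ : ℕ} (m m' : Fin τ → ℤˣ) (j : ℕ) :
    extSign τ (m * m') j = extSign τ m j * extSign τ m' j := by
  unfold extSign; split_ifs <;> simp

def subsetChar (τ : ℕ) (T : Finset ℕ) : (Fin τ → ℤˣ) →* ℤˣ where
  toFun m := ∏ j ∈ T, extSign τ m j
  map_one' := prod_eq_one fun j _ => by unfold extSign; split_ifs <;> rfl
  map_mul' m m' := by simp only [extSign_mul, prod_mul_distrib]

variable {τ : ℕ}

lemma subsetChar_apply (T : Finset ℕ) (m : Fin τ → ℤˣ) :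
    subsetChar τ T m = ∏ j ∈ T, extSign τ m j := rfl

lemma subsetChar_symmDiff (X Y : Finset ℕ) (m : Fin τ → ℤˣ) :
    subsetChar τ (X ∆ Y) m = subsetChar τ X m * subsetChar τ Y m :=
  prod_symmDiff_of_mul_self (fun _ => Int.units_mul_self _) X Y

lemma subsetChar_mulSingle {X : Finset ℕ} {j : Fin τ} (hj : (j : ℕ) ∈ X) :
    subsetChar τ X (Pi.mulSingle j (-1)) = -1 := by
  rw [subsetChar_apply, prod_eq_single_of_mem _ hj]
  · simp [extSign]
  · intro k _ hkj
    unfold extSign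
    split_ifs with hk
    · exact Pi.mulSingle_eq_of_ne (fun h => hkj (congrArg Fin.val h)) _
    · rfl

lemma sum_signC_subsetChar {X : Finset ℕ} (hX : X ⊆ range τ) :
    ∑ m, signC (subsetChar τ X m) = if X = ∅ then 2 ^ τ else 0 := by
  split_ifs with h
  · simp [h, subsetChar_apply, signC_one, Fintype.card_pi]
  · obtain ⟨j, hj⟩ := nonempty_iff_ne_empty.2 h
    refine sum_hom_units_eq_zero (signHom.comp (subsetChar τ X)) fun h1 => ?_
    have := DFunLike.congr_fun h1 (Pi.mulSingle ⟨j, mem_range.1 (hX hj)⟩ (-1))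
    rw [MonoidHom.comp_apply, subsetChar_mulSingle hj] at this
    norm_num [signHom_apply, signC] at this

lemma sum_powerset_signC_subsetChar (g : Fin τ → ℤˣ) :
    ∑ T ∈ (range τ).powerset, signC (subsetChar τ T g) = if g = 1 then 2 ^ τ else 0 := by
  simp_rw [subsetChar_apply, signC_prod, ← prod_one_add, prod_one_add_signC, card_range]
  refine if_congr ⟨fun h => funext fun i => ?_, fun h j hj => ?_⟩ rfl rfl
  · simpa [extSign] using h i (mem_range.2 i.2)
  · simp [h, extSign]

lemma sum_subgroup_signC_subsetChar (H : Subgroup (Fin τ → ℤˣ)) (T : Finset ℕ) :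
    ∑ h : H, signC (subsetChar τ T h) =
      if H ≤ (subsetChar τ T).ker then (Nat.card H : ℂ) else 0 := by
  have hiff : signHom.comp ((subsetChar τ T).comp H.subtype) = 1 ↔ H ≤ (subsetChar τ T).ker := by
    refine ⟨fun h x hx => signC_injective ?_, fun h => MonoidHom.ext fun x => ?_⟩
    · simpa [signHom_apply, signC_one] using DFunLike.congr_fun h ⟨x, hx⟩
    · simp [signHom_apply, MonoidHom.mem_ker.1 (h x.2), signC_one]
  have := sum_hom_units (signHom.comp ((subsetChar τ T).comp H.subtype))
  simp only [hiff, Nat.card_eq_fintype_card, MonoidHom.comp_apply, signHom_apply,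
    Subgroup.coe_subtype] at this ⊢
  rw [this]; split_ifs <;> simp

lemma sum_subgroup_ite_mul_eq_one (H : Subgroup (Fin τ → ℤˣ)) (s : Fin τ → ℤˣ) (c : ℂ) :
    ∑ h : H, (if (h : Fin τ → ℤˣ) * s = 1 then c else 0) = if s ∈ H then c else 0 := by
  split_ifs with hs
  · rw [Fintype.sum_eq_single ⟨s⁻¹, H.inv_mem hs⟩ fun h hne => if_neg fun heq =>
      hne (Subtype.ext (eq_inv_of_mul_eq_one_left heq))]
    simp
  · exact sum_eq_zero fun h _ => if_neg fun heq =>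
      hs (by simpa using H.inv_mem h.2 |> (eq_inv_of_mul_eq_one_right heq ▸ ·))

theorem sum_filter_le_ker_signC_subsetChar (H : Subgroup (Fin τ → ℤˣ)) (s : Fin τ → ℤˣ) :
    ∑ T ∈ (range τ).powerset with H ≤ (subsetChar τ T).ker, signC (subsetChar τ T s) =
      if s ∈ H then (2 ^ τ / Nat.card H : ℂ) else 0 := by
  calc ∑ T ∈ (range τ).powerset with H ≤ (subsetChar τ T).ker, signC (subsetChar τ T s)
      = ∑ T ∈ (range τ).powerset,
          (Nat.card H : ℂ)⁻¹ * (∑ h : H, signC (subsetChar τ T h)) * signC (subsetChar τ T s) := by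
        rw [sum_filter]
        refine sum_congr rfl fun T _ => ?_
        rw [sum_subgroup_signC_subsetChar]
        split_ifs <;> simp
    _ = (Nat.card H : ℂ)⁻¹ *
          ∑ h : H, ∑ T ∈ (range τ).powerset, signC (subsetChar τ T (h * s)) := by
        simp_rw [map_mul, signC_mul, mul_sum, sum_mul]
        rw [sum_comm]
        simp_rw [mul_assoc]
    _ = if s ∈ H then (2 ^ τ / Nat.card H : ℂ) else 0 := by
        simp_rw [sum_powerset_signC_subsetChar, sum_subgroup_ite_mul_eq_one]
        split_ifs <;> simp [div_eq_inv_mul]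

lemma sum_trace_mul_sum_smul {d : ℕ} (a : Finset ℕ → ℂ)
    (M : Finset ℕ → Matrix (Fin d) (Fin d) ℂ) (s : Fin τ → ℤˣ) :
    ∑ m : Fin τ → ℤˣ, trace
        ((∑ T ∈ (range τ).powerset, (a T * signC (subsetChar τ T (m * s))) • M T) *
          ∑ U ∈ (range τ).powerset, (a U * signC (subsetChar τ U m)) • M U) =
      2 ^ τ * ∑ T ∈ (range τ).powerset, a T ^ 2 * signC (subsetChar τ T s) * trace (M T * M T) := by
  calc _ = ∑ T ∈ (range τ).powerset, ∑ U ∈ (range τ).powerset,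
          a T * a U * signC (subsetChar τ T s) * trace (M T * M U) *
            ∑ m : Fin τ → ℤˣ, signC (subsetChar τ (T ∆ U) m) := by
        simp_rw [sum_mul_sum, smul_mul_smul_comm, trace_sum, trace_smul, smul_eq_mul, mul_sum]
        rw [sum_comm]
        refine sum_congr rfl fun T _ => ?_
        rw [sum_comm]
        refine sum_congr rfl fun U _ => sum_congr rfl fun m _ => ?_
        rw [subsetChar_symmDiff, map_mul, signC_mul, signC_mul]
        ring
    _ = ∑ T ∈ (range τ).powerset, ∑ U ∈ (range τ).powerset,
          if T = U then 2 ^ τ * (a T ^ 2 * signC (subsetChar τ T s) * trace (M T * M T))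
          else 0 := by
        refine sum_congr rfl fun T hT => sum_congr rfl fun U hU => ?_
        rw [sum_signC_subsetChar (mem_powerset.1 (symmDiff_mem_powerset hT hU))]
        simp only [← bot_eq_empty, symmDiff_eq_bot]
        split_ifs with h
        · subst h; ring
        · rw [mul_zero]
    _ = _ := by simp_rw [sum_ite_eq, mul_sum]; exact sum_congr rfl fun T hT => if_pos hT

end Characters

section CrossSign

variable (ε : ℕ → ℕ → ℤˣ)

def rowSign (i : ℕ) (S : Finset ℕ) : ℤˣ := ∏ j ∈ S, if i < j then ε i j else 1

/-- The sign in `word S * word T = crossSign T S • word (S ∆ T)`: each `P_i`, `i ∈ T`, is moved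
left past every `P_j` with `j ∈ S`, `j > i`. -/
def crossSign (T S : Finset ℕ) : ℤˣ := ∏ i ∈ T, rowSign ε i S

lemma rowSign_symmDiff (i : ℕ) (X Y : Finset ℕ) :
    rowSign ε i (X ∆ Y) = rowSign ε i X * rowSign ε i Y :=
  prod_symmDiff_of_mul_self (fun _ => Int.units_mul_self _) X Y

lemma crossSign_symmDiff_right (T X Y : Finset ℕ) :
    crossSign ε T (X ∆ Y) = crossSign ε T X * crossSign ε T Y := by
  simp only [crossSign, rowSign_symmDiff, prod_mul_distrib]

lemma rowSign_eq_one_of_subset {i : ℕ} {S : Finset ℕ} (hS : S ⊆ range (i + 1)) :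
    rowSign ε i S = 1 :=
  prod_eq_one fun j hj => if_neg (by have := mem_range.1 (hS hj); omega)

lemma rowSign_eq_rowSign_erase_mul {i t : ℕ} (hi : i ≤ t) (S : Finset ℕ) :
    rowSign ε i S = rowSign ε i (S.erase (t + 1)) * if t + 1 ∈ S then ε i (t + 1) else 1 := by
  rw [rowSign, prod_eq_prod_erase_mul_ite _ _ (t + 1), if_pos (by omega : i < t + 1), rowSign]

lemma crossSign_succ (hεsymm : ∀ i j, ε i j = ε j i) {S T : Finset ℕ} {t : ℕ}
    (hS : S ⊆ range (t + 2)) (hT : T ⊆ range (t + 2)) :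
    crossSign ε T S = crossSign ε (T.erase (t + 1)) (S.erase (t + 1)) *
      if t + 1 ∈ S then ∏ i ∈ T.erase (t + 1), ε (t + 1) i else 1 := by
  have hT' := erase_subset_range hT
  rw [crossSign, prod_eq_prod_erase_mul_ite _ _ (t + 1), rowSign_eq_one_of_subset ε hS, ite_self,
    mul_one, prod_congr rfl fun i hi =>
      rowSign_eq_rowSign_erase_mul ε (Nat.lt_succ_iff.1 (mem_range.1 (hT' hi))) S,
    prod_mul_distrib, crossSign]
  split_ifs
  · simp_rw [hεsymm _ (t + 1)]
  · simp

variable {ε} {τ : ℕ}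

lemma subsetChar_ehatRev (hεdiag : ∀ i, ε i i = 1) {T : Finset ℕ} (hT : T ⊆ range τ)
    (i : Fin τ) : subsetChar τ T (ehatRev ε i) = rowSign ε i T := by
  refine prod_congr rfl fun j hj => ?_
  have hjτ := mem_range.1 (hT hj)
  simp only [extSign, dif_pos hjτ, ehatRev]
  rcases lt_trichotomy (i : ℕ) j with h | rfl | h
  · rw [if_pos h.le, if_pos h]
  · rw [if_pos le_rfl, if_neg (lt_irrefl _), hεdiag]
  · rw [if_neg (not_le.2 h), if_neg (by omega)]

lemma ehatRev_le_ker_iff (hεdiag : ∀ i, ε i i = 1) {T : Finset ℕ} (hT : T ⊆ range τ) :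
    EhatRev τ ε ≤ (subsetChar τ T).ker ↔ ∀ i ∈ range τ, rowSign ε i T = 1 := by
  rw [EhatRev, Subgroup.closure_le, Set.range_subset_iff, Fin.forall_iff]
  simp only [SetLike.mem_coe, MonoidHom.mem_ker, subsetChar_ehatRev hεdiag hT, mem_range]

lemma sum_powerset_signC_crossSign (hεdiag : ∀ i, ε i i = 1) {T : Finset ℕ}
    (hT : T ⊆ range τ) :
    ∑ Y ∈ (range τ).powerset, signC (crossSign ε Y T) =
      if EhatRev τ ε ≤ (subsetChar τ T).ker then 2 ^ τ else 0 := by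
  simp_rw [crossSign, signC_prod, ← prod_one_add, prod_one_add_signC, card_range,
    ehatRev_le_ker_iff hεdiag hT]

lemma crossSign_eq_one_of_le_ker (hεdiag : ∀ i, ε i i = 1) {T Y : Finset ℕ} (hT : T ⊆ range τ)
    (hY : Y ⊆ range τ) (h : EhatRev τ ε ≤ (subsetChar τ T).ker) : crossSign ε Y T = 1 :=
  prod_eq_one fun i hi => (ehatRev_le_ker_iff hεdiag hT).1 h i (hY hi)

end CrossSign

section Words

variable {d : ℕ} (P : ℕ → Matrix (Fin d) (Fin d) ℂ)

def letter (S : Finset ℕ) (j : ℕ) : Matrix (Fin d) (Fin d) ℂ := if j ∈ S then P j else 1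

def word (S : Finset ℕ) : ℕ → Matrix (Fin d) (Fin d) ℂ
  | 0 => letter P S 0
  | t + 1 => word S t * letter P S (t + 1)

lemma word_congr {S S' : Finset ℕ} : ∀ {t : ℕ}, (∀ j ≤ t, (j ∈ S ↔ j ∈ S')) →
    word P S t = word P S' t
  | 0, h => by simp only [word, letter, h 0 le_rfl]
  | t + 1, h => by
    rw [word, word, word_congr fun j hj => h j (by omega)]
    simp only [letter, h (t + 1) le_rfl]

lemma word_empty : ∀ t, word P ∅ t = 1
  | 0 => by simp [word, letter]
  | t + 1 => by simp [word, letter, word_empty t]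

lemma word_succ (S : Finset ℕ) (t : ℕ) :
    word P S (t + 1) = word P (S.erase (t + 1)) t * letter P S (t + 1) := by
  rw [word, word_congr P (S' := S.erase (t + 1)) fun j hj => by
    rw [mem_erase]; exact ⟨fun h => ⟨by omega, h⟩, And.right⟩]

variable {P} {ε : ℕ → ℕ → ℤˣ}

lemma conjTranspose_word_mul_word (hherm : ∀ j, (P j)ᴴ = P j) (hinv : ∀ j, P j * P j = 1)
    (S : Finset ℕ) : ∀ t, (word P S t)ᴴ * word P S t = 1 := by
  have hletter : ∀ j, (letter P S j)ᴴ * letter P S j = 1 := fun j => by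
    unfold letter; split_ifs <;> simp [hherm, hinv]
  intro t
  induction t with
  | zero => exact hletter 0
  | succ t ih =>
    rw [word, conjTranspose_mul, mul_assoc, ← mul_assoc (word P S t)ᴴ, ih, one_mul, hletter]

lemma letter_mul_letter (hinv : ∀ j, P j * P j = 1) (S T : Finset ℕ) (j : ℕ) :
    letter P S j * letter P T j = letter P (S ∆ T) j := by
  unfold letter; by_cases hS : j ∈ S <;> by_cases hT : j ∈ T <;> simp [hS, hT, hinv, mem_symmDiff]

lemma mul_letter (hcomm : ∀ i j, P i * P j = signC (ε i j) • (P j * P i)) (k : ℕ)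
    (S : Finset ℕ) (j : ℕ) :
    P k * letter P S j = signC (if j ∈ S then ε k j else 1) • (letter P S j * P k) := by
  unfold letter; split_ifs
  · exact hcomm k j
  · simp [signC_one]

lemma mul_word (hcomm : ∀ i j, P i * P j = signC (ε i j) • (P j * P i)) (k : ℕ) :
    ∀ t, ∀ S ⊆ range (t + 1),
      P k * word P S t = signC (∏ i ∈ S, ε k i) • (word P S t * P k) := by
  intro t
  induction t with
  | zero =>
    intro S hS
    rw [prod_eq_prod_erase_mul_ite _ _ 0, subset_empty.1 (erase_subset_range hS), prod_empty,
      one_mul]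
    exact mul_letter hcomm k S 0
  | succ t ih =>
    intro S hS
    rw [word_succ, ← mul_assoc, ih _ (erase_subset_range hS), smul_mul_assoc, mul_assoc,
      mul_letter hcomm, mul_smul_comm, smul_smul, ← mul_assoc, ← signC_mul,
      ← prod_eq_prod_erase_mul_ite]

lemma letter_mul_word (hcomm : ∀ i j, P i * P j = signC (ε i j) • (P j * P i)) (S : Finset ℕ)
    (j : ℕ) {t : ℕ} {T : Finset ℕ} (hT : T ⊆ range (t + 1)) :
    letter P S j * word P T t =
      signC (if j ∈ S then ∏ i ∈ T, ε j i else 1) • (word P T t * letter P S j) := by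
  unfold letter; split_ifs
  · exact mul_word hcomm j t T hT
  · simp [signC_one]

lemma word_mul_word (hinv : ∀ j, P j * P j = 1) (hεsymm : ∀ i j, ε i j = ε j i)
    (hcomm : ∀ i j, P i * P j = signC (ε i j) • (P j * P i)) :
    ∀ t, ∀ S ⊆ range (t + 1), ∀ T ⊆ range (t + 1),
      word P S t * word P T t = signC (crossSign ε T S) • word P (S ∆ T) t := by
  intro t
  induction t with
  | zero =>
    intro S hS T hT
    have hσ : crossSign ε T S = 1 := prod_eq_one fun i hi => by
      obtain rfl : i = 0 := by have := mem_range.1 (hT hi); omega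
      exact rowSign_eq_one_of_subset ε hS
    rw [hσ, signC_one, one_smul]
    exact letter_mul_letter hinv S T 0
  | succ t ih =>
    intro S hS T hT
    have hS' := erase_subset_range hS
    have hT' := erase_subset_range hT
    calc word P S (t + 1) * word P T (t + 1)
        = word P (S.erase (t + 1)) t * (letter P S (t + 1) * word P (T.erase (t + 1)) t) *
            letter P T (t + 1) := by simp only [word_succ, mul_assoc]
      _ = signC (if t + 1 ∈ S then ∏ i ∈ T.erase (t + 1), ε (t + 1) i else 1) •
            (word P (S.erase (t + 1)) t * word P (T.erase (t + 1)) t *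
              (letter P S (t + 1) * letter P T (t + 1))) := by
          rw [letter_mul_word hcomm _ _ hT']
          simp only [mul_smul_comm, smul_mul_assoc, mul_assoc]
      _ = signC (crossSign ε T S) • word P (S ∆ T) (t + 1) := by
          rw [ih _ hS' _ hT', letter_mul_letter hinv, smul_mul_assoc, smul_smul, ← signC_mul,
            mul_comm, ← crossSign_succ ε hεsymm hS hT, word_succ, erase_symmDiff]

lemma word_mul_self_of_le_ker (hinv : ∀ j, P j * P j = 1) (hεdiag : ∀ i, ε i i = 1)
    (hεsymm : ∀ i j, ε i j = ε j i) (hcomm : ∀ i j, P i * P j = signC (ε i j) • (P j * P i))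
    {t : ℕ} {T : Finset ℕ} (hT : T ⊆ range (t + 1))
    (h : EhatRev (t + 1) ε ≤ (subsetChar (t + 1) T).ker) :
    word P T t * word P T t = 1 := by
  rw [word_mul_word hinv hεsymm hcomm t T hT T hT, crossSign_eq_one_of_le_ker hεdiag hT hT h,
    symmDiff_self, bot_eq_empty, word_empty, signC_one, one_smul]

variable (hherm : ∀ j, (P j)ᴴ = P j) (hinv : ∀ j, P j * P j = 1) (hεsymm : ∀ i j, ε i j = ε j i)
  (hcomm : ∀ i j, P i * P j = signC (ε i j) • (P j * P i))
include hherm hinv hεsymm hcomm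

lemma conjTranspose_word {t : ℕ} {S : Finset ℕ} (hS : S ⊆ range (t + 1)) :
    (word P S t)ᴴ = signC (crossSign ε S S) • word P S t := by
  have hsq := word_mul_word hinv hεsymm hcomm t S hS S hS
  rw [symmDiff_self, bot_eq_empty, word_empty] at hsq
  calc (word P S t)ᴴ
      = (word P S t)ᴴ * (signC (crossSign ε S S) • (word P S t * word P S t)) := by
        rw [hsq, smul_smul, signC_mul_self, one_smul, mul_one]
    _ = signC (crossSign ε S S) • word P S t := by
        rw [mul_smul_comm, ← mul_assoc, conjTranspose_word_mul_word hherm hinv, one_mul]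

lemma word_mul_conjTranspose_word {t : ℕ} {X Y : Finset ℕ} (hX : X ⊆ range (t + 1))
    (hY : Y ⊆ range (t + 1)) :
    word P X t * (word P Y t)ᴴ = signC (crossSign ε Y (X ∆ Y)) • word P (X ∆ Y) t := by
  rw [conjTranspose_word hherm hinv hεsymm hcomm hY, mul_smul_comm,
    word_mul_word hinv hεsymm hcomm t X hX Y hY, smul_smul, ← signC_mul,
    ← crossSign_symmDiff_right, symmDiff_comm Y X]

end Words

section Projectors

variable {d : ℕ}

lemma piOpRev_eq_sum (P : ℕ → Matrix (Fin d) (Fin d) ℂ) (m : ℕ → ℤˣ) : ∀ t, PiOpRev P m t =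
    ∑ S ∈ (range (t + 1)).powerset, (2⁻¹ ^ (t + 1) * signC (∏ j ∈ S, m j)) • word P S t
  | 0 => by
    rw [show range 1 = insert 0 ∅ from rfl, sum_powerset_insert (notMem_empty 0)]
    simp [PiOpRev, proj, word, letter, smul_add, smul_smul, signC_one]
  | t + 1 => by
    have hnot : t + 1 ∉ range (t + 1) := notMem_range_self
    rw [PiOpRev, piOpRev_eq_sum P m t, range_add_one (n := t + 1), sum_powerset_insert hnot,
      sum_mul, ← sum_add_distrib]
    refine sum_congr rfl fun S hS => ?_
    have hSt : t + 1 ∉ S := fun h => hnot (mem_powerset.1 hS h)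
    rw [word_succ, word_succ, erase_eq_of_notMem hSt, erase_insert hSt, prod_insert hSt]
    simp only [letter, if_neg hSt, if_pos (mem_insert_self _ _), proj, signC_mul]
    simp only [smul_mul_assoc, mul_smul_comm, mul_add, smul_add, smul_smul, mul_one]
    congr 2 <;> ring

lemma piOpRev_mul_conjTranspose {P : ℕ → Matrix (Fin d) (Fin d) ℂ} {ε : ℕ → ℕ → ℤˣ}
    (hherm : ∀ j, (P j)ᴴ = P j) (hinv : ∀ j, P j * P j = 1) (hεsymm : ∀ i j, ε i j = ε j i)
    (hcomm : ∀ i j, P i * P j = signC (ε i j) • (P j * P i)) (m : ℕ → ℤˣ) (t : ℕ) :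
    PiOpRev P m t * (PiOpRev P m t)ᴴ = ∑ T ∈ (range (t + 1)).powerset,
      ((2⁻¹ ^ (t + 1)) ^ 2 * (∑ Y ∈ (range (t + 1)).powerset, signC (crossSign ε Y T)) *
        signC (∏ j ∈ T, m j)) • word P T t := by
  calc PiOpRev P m t * (PiOpRev P m t)ᴴ
      = ∑ X ∈ (range (t + 1)).powerset, ∑ Y ∈ (range (t + 1)).powerset,
          ((2⁻¹ ^ (t + 1)) ^ 2 * signC (crossSign ε Y (X ∆ Y)) * signC (∏ j ∈ X ∆ Y, m j)) •
            word P (X ∆ Y) t := by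
        rw [piOpRev_eq_sum, conjTranspose_sum, sum_mul_sum]
        refine sum_congr rfl fun X hX => sum_congr rfl fun Y hY => ?_
        rw [conjTranspose_smul, smul_mul_smul_comm, word_mul_conjTranspose_word hherm hinv hεsymm
          hcomm (mem_powerset.1 hX) (mem_powerset.1 hY), smul_smul,
          prod_symmDiff_of_mul_self (fun _ => Int.units_mul_self _), signC_mul]
        congr 1
        simp only [star_mul', star_signC, star_pow, star_inv₀, star_ofNat]
        ring
    _ = ∑ Y ∈ (range (t + 1)).powerset, ∑ T ∈ (range (t + 1)).powerset,
          ((2⁻¹ ^ (t + 1)) ^ 2 * signC (crossSign ε Y T) * signC (∏ j ∈ T, m j)) •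
            word P T t := by
        rw [sum_comm]
        exact sum_congr rfl fun Y hY => sum_powerset_symmDiff hY fun T =>
          ((2⁻¹ ^ (t + 1)) ^ 2 * signC (crossSign ε Y T) * signC (∏ j ∈ T, m j)) • word P T t
    _ = _ := by
        rw [sum_comm]
        simp_rw [mul_sum, sum_mul, sum_smul]

lemma probRev_eq_trace_mul (t : ℕ) (P : ℕ → Matrix (Fin d) (Fin d) ℂ)
    (m m' : Fin (t + 1) → ℤˣ) :
    ProbRev d (t + 1) P m m' = (d : ℂ)⁻¹ * trace
      ((PiOpRev P (extSign (t + 1) m') t * (PiOpRev P (extSign (t + 1) m') t)ᴴ) *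
        (PiOpRev P (extSign (t + 1) m) t * (PiOpRev P (extSign (t + 1) m) t)ᴴ)) := by
  rw [ProbRev, Nat.add_sub_cancel]
  set A := PiOpRev P (extSign (t + 1) m) t
  set B := PiOpRev P (extSign (t + 1) m') t
  rw [trace_mul_comm _ A, trace_mul_comm (B * Bᴴ)]
  simp only [mul_assoc]

end Projectors

end ReverseDistillation

open ReverseDistillation

theorem sum_probRev_eq_inv_card_EhatRev_general
    {d τ : ℕ} (hd : 1 ≤ d) (hτ : 1 ≤ τ)
    (P : ℕ → Matrix (Fin d) (Fin d) ℂ)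
    (hherm : ∀ j, (P j)ᴴ = P j)
    (hinv : ∀ j, P j * P j = 1)
    (ε : ℕ → ℕ → ℤˣ)
    (hεdiag : ∀ i, ε i i = 1)
    (hεsymm : ∀ i j, ε i j = ε j i)
    (hcomm : ∀ i j, P i * P j = signC (ε i j) • (P j * P i))
    (s : Fin τ → ℤˣ) :
    (∑ m : Fin τ → ℤˣ, ProbRev d τ P m (m * s)) =
      if s ∈ EhatRev τ ε then ((Nat.card (EhatRev τ ε) : ℂ))⁻¹ else 0 := by
  obtain ⟨t, rfl⟩ : ∃ t, τ = t + 1 := ⟨τ - 1, by omega⟩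
  have hd0 : (d : ℂ) ≠ 0 := Nat.cast_ne_zero.2 (by omega)
  simp_rw [probRev_eq_trace_mul, piOpRev_mul_conjTranspose hherm hinv hεsymm hcomm,
    ← subsetChar_apply, ← mul_sum, sum_trace_mul_sum_smul]
  have hterm : ∀ T ∈ (range (t + 1)).powerset,
      ((2⁻¹ ^ (t + 1)) ^ 2 * ∑ Y ∈ (range (t + 1)).powerset, signC (crossSign ε Y T)) ^ 2 *
        signC (subsetChar (t + 1) T s) * trace (word P T t * word P T t) =
      if EhatRev (t + 1) ε ≤ (subsetChar (t + 1) T).ker then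
        (2⁻¹ ^ (t + 1)) ^ 2 * d * signC (subsetChar (t + 1) T s) else 0 := by
    intro T hT
    rw [sum_powerset_signC_crossSign hεdiag (mem_powerset.1 hT)]
    split_ifs with h
    · rw [word_mul_self_of_le_ker hinv hεdiag hεsymm hcomm (mem_powerset.1 hT) h, trace_one,
        Fintype.card_fin, inv_pow]
      field_simp
    · simp
  rw [sum_congr rfl hterm, ← sum_filter, ← mul_sum, sum_filter_le_ker_signC_subsetChar]
  split_ifs
  · rw [inv_pow]
    field_simp
  · simp

/-- for traceless measured Pauli operators, the total probability
of the sum outcome `s = m·m̄` in the system–reference distillation algorithm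
(reverse-order measurements) is `1/|Ê_rev|` if `s ∈ Ê_rev` and `0` otherwise;
in particular `s` occurs with nonzero probability iff `s ∈ Ê_rev`. -/
theorem sum_probRev_eq_inv_card_EhatRev
    {d τ : ℕ} (hd : 1 ≤ d) (hτ : 1 ≤ τ)
    (P : ℕ → Matrix (Fin d) (Fin d) ℂ)
    (hherm : ∀ j, (P j)ᴴ = P j)
    (hinv : ∀ j, P j * P j = 1)
    (ε : ℕ → ℕ → ℤˣ)
    (hεdiag : ∀ i, ε i i = 1)
    (hεsymm : ∀ i j, ε i j = ε j i)
    (hcomm : ∀ i j, P i * P j = signC (ε i j) • (P j * P i))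
    (htr : ∀ j, Matrix.trace (P j) = 0)
    (s : Fin τ → ℤˣ) :
    (∑ m : Fin τ → ℤˣ, ProbRev d τ P m (m * s)) =
      if s ∈ EhatRev τ ε then ((Nat.card (EhatRev τ ε) : ℂ))⁻¹ else 0 :=
  sum_probRev_eq_inv_card_EhatRev_general hd hτ P hherm hinv ε hεdiag hεsymm hcomm s
end
end
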